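/- Let X and G be random A × N real matrices on a probability space whose entries are square-integrable, let γ ∈ ℝ with 0 < γ ≤ 1, and let b ∈ ℝ^N be a fixed vector. Then there exists Δt₀ > 0 such that for all Δt with 0 ≤ Δt ≤ Δt₀, bᵀ (E[Xᵀ (X − γ Δt G)]) b ≥ 0, where the expectation of a random matrix is taken entrywise. -/

import Mathlib

/-!
Writing `u = X b` and `w = G b`, the quadratic form equals `E[u ⬝ u] - γ Δt E[u ⬝ w]`. If
`E[u ⬝ u] = 0` then `u = 0` almost surely, so `E[u ⬝ w] = 0` and the form vanishes for every
`Δt`; otherwise `E[u ⬝ u] > 0` dominates the cross term once `Δt` is small.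
-/

open MeasureTheory Matrix

theorem exists_pos_forall_nonneg_sub_mul {a c : ℝ} (ha : 0 ≤ a) (hac : a = 0 → c = 0) :
    ∃ δ > 0, ∀ t : ℝ, 0 ≤ t → t ≤ δ → 0 ≤ a - t * c := by
  rcases ha.eq_or_lt with rfl | ha_pos
  · exact ⟨1, one_pos, fun t _ _ => by simp [hac rfl]⟩
  · have hden : 0 < |c| + 1 := by positivity
    refine ⟨a / (|c| + 1), div_pos ha_pos hden, fun t ht0 htδ => ?_⟩
    have : t * (|c| + 1) ≤ a := (le_div_iff₀ hden).mp htδ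
    nlinarith [le_abs_self c]

theorem dotProduct_transpose_mul_sub_smul_mulVec {m n R : Type*} [Fintype m] [Fintype n]
    [CommRing R] (X G : Matrix m n R) (c : R) (b : n → R) :
    b ⬝ᵥ (Xᵀ * (X - c • G)) *ᵥ b = (X *ᵥ b) ⬝ᵥ (X *ᵥ b) - c * (X *ᵥ b) ⬝ᵥ (G *ᵥ b) := by
  rw [← mulVec_mulVec, dotProduct_mulVec, vecMul_transpose, sub_mulVec, smul_mulVec,
    dotProduct_sub, dotProduct_smul, smul_eq_mul]

section Expectation

variable {Ω : Type*} [MeasurableSpace Ω] {P : Measure Ω}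

theorem integrable_dotProduct_of_memLp_two {ι : Type*} [Fintype ι] {u v : Ω → ι → ℝ}
    (hu : ∀ i, MemLp (fun ω => u ω i) 2 P) (hv : ∀ i, MemLp (fun ω => v ω i) 2 P) :
    Integrable (fun ω => u ω ⬝ᵥ v ω) P :=
  integrable_finsetSum _ fun i _ => (hu i).integrable_mul (hv i)

theorem memLp_mulVec_apply {m n : Type*} [Fintype n] {p : ENNReal}
    {M : Ω → Matrix m n ℝ} (hM : ∀ i j, MemLp (fun ω => M ω i j) p P) (b : n → ℝ) (i : m) :
    MemLp (fun ω => (M ω *ᵥ b) i) p P :=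
  memLp_finsetSum _ fun j _ => (hM i j).mul_const (b j)

theorem integrable_mul_apply_of_memLp_two {l m n : Type*} [Fintype m]
    {M : Ω → Matrix l m ℝ} {N : Ω → Matrix m n ℝ}
    (hM : ∀ i j, MemLp (fun ω => M ω i j) 2 P) (hN : ∀ i j, MemLp (fun ω => N ω i j) 2 P)
    (i : l) (k : n) :
    Integrable (fun ω => (M ω * N ω) i k) P := by
  simp only [mul_apply']
  exact integrable_dotProduct_of_memLp_two (fun j => hM i j) (fun j => hN j k)

theorem dotProduct_entrywise_integral_mulVec {m n : Type*} [Fintype m] [Fintype n]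
    {M : Ω → Matrix m n ℝ} (hM : ∀ i j, Integrable (fun ω => M ω i j) P)
    (a : m → ℝ) (b : n → ℝ) :
    a ⬝ᵥ (of fun i j => ∫ ω, M ω i j ∂P) *ᵥ b = ∫ ω, a ⬝ᵥ M ω *ᵥ b ∂P := by
  have hentry : ∀ i j, Integrable (fun ω => a i * (M ω i j * b j)) P := fun i j =>
    ((hM i j).mul_const (b j)).const_mul (a i)
  simp only [dotProduct, mulVec, of_apply, Finset.mul_sum]
  rw [integral_finsetSum _ fun i _ => integrable_finsetSum _ fun j _ => hentry i j]
  refine Finset.sum_congr rfl fun i _ => ?_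
  rw [integral_finsetSum _ fun j _ => hentry i j]
  refine Finset.sum_congr rfl fun j _ => ?_
  rw [integral_const_mul, integral_mul_const]

theorem integral_dotProduct_eq_zero_of_integral_dotProduct_self_eq_zero {ι : Type*}
    [Fintype ι] {u : Ω → ι → ℝ} (hu : Integrable (fun ω => u ω ⬝ᵥ u ω) P)
    (h : ∫ ω, u ω ⬝ᵥ u ω ∂P = 0) (w : Ω → ι → ℝ) :
    ∫ ω, u ω ⬝ᵥ w ω ∂P = 0 := by
  have hu0 : ∀ᵐ ω ∂P, u ω = 0 := by
    filter_upwards [(integral_eq_zero_iff_of_nonneg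
      (fun ω => Finset.sum_nonneg fun i _ => mul_self_nonneg (u ω i)) hu).mp h] with ω hω
    exact dotProduct_self_eq_zero.mp hω
  rw [integral_congr_ae (g := fun _ => (0 : ℝ)) (hu0.mono fun ω hω => by simp [hω]),
    integral_zero]

theorem integral_quadForm_transpose_mul_sub_smul {m n : Type*} [Fintype m] [Fintype n]
    {X G : Ω → Matrix m n ℝ} (hX : ∀ i j, MemLp (fun ω => X ω i j) 2 P)
    (hG : ∀ i j, MemLp (fun ω => G ω i j) 2 P) (c : ℝ) (b : n → ℝ) :
    b ⬝ᵥ (of fun i j => ∫ ω, ((X ω)ᵀ * (X ω - c • G ω)) i j ∂P) *ᵥ b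
      = (∫ ω, (X ω *ᵥ b) ⬝ᵥ (X ω *ᵥ b) ∂P) - c * ∫ ω, (X ω *ᵥ b) ⬝ᵥ (G ω *ᵥ b) ∂P := by
  have hXb := memLp_mulVec_apply hX b
  have hXG : ∀ i j, MemLp (fun ω => (X ω - c • G ω) i j) 2 P := fun i j =>
    (hX i j).sub ((hG i j).const_mul c)
  rw [dotProduct_entrywise_integral_mulVec
    (integrable_mul_apply_of_memLp_two (M := fun ω => (X ω)ᵀ) (fun i j => hX j i) hXG) b b]
  simp only [dotProduct_transpose_mul_sub_smul_mulVec]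
  rw [integral_sub (integrable_dotProduct_of_memLp_two hXb hXb)
    ((integrable_dotProduct_of_memLp_two hXb (memLp_mulVec_apply hG b)).const_mul c),
    integral_const_mul]

end Expectation

theorem quadratic_form_nonneg_for_small_timestep_general
    {Ω : Type*} [MeasurableSpace Ω] (P : Measure Ω)
    {A N : ℕ}
    (X G : Ω → Matrix (Fin A) (Fin N) ℝ)
    (hX : ∀ i j, MemLp (fun ω => X ω i j) 2 P)
    (hG : ∀ i j, MemLp (fun ω => G ω i j) 2 P)
    (γ : ℝ)
    (b : Fin N → ℝ) :
    ∃ Δt₀ > (0 : ℝ), ∀ Δt : ℝ, 0 ≤ Δt → Δt ≤ Δt₀ →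
      0 ≤ b ⬝ᵥ (Matrix.of fun i j =>
            ∫ ω, ((X ω)ᵀ * (X ω - (γ * Δt) • G ω)) i j ∂P).mulVec b := by
  have hXb := memLp_mulVec_apply hX b
  have hnonneg : 0 ≤ ∫ ω, (X ω *ᵥ b) ⬝ᵥ (X ω *ᵥ b) ∂P :=
    integral_nonneg fun ω => Finset.sum_nonneg fun i _ => mul_self_nonneg _
  obtain ⟨δ, hδ, hsmall⟩ := exists_pos_forall_nonneg_sub_mul hnonneg
    (c := γ * ∫ ω, (X ω *ᵥ b) ⬝ᵥ (G ω *ᵥ b) ∂P) fun h => by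
      rw [integral_dotProduct_eq_zero_of_integral_dotProduct_self_eq_zero
        (integrable_dotProduct_of_memLp_two hXb hXb) h, mul_zero]
  refine ⟨δ, hδ, fun Δt h0 h1 => ?_⟩
  rw [integral_quadForm_transpose_mul_sub_smul hX hG, mul_assoc, mul_left_comm]
  exact hsmall Δt h0 h1

/-- Appendix B combined case analysis: with the next-state feature Jacobian scaling as
`Δt • G`, the quadratic form of `Ã = E[Xᵀ(X - γ Δt G)]` at a fixed test vector `b` is
nonnegative for all sufficiently small timesteps `Δt ≥ 0`. -/
theorem quadratic_form_nonneg_for_small_timestep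
    {Ω : Type*} [MeasurableSpace Ω] (P : Measure Ω) [IsProbabilityMeasure P]
    {A N : ℕ}
    (X G : Ω → Matrix (Fin A) (Fin N) ℝ)
    (hX : ∀ i j, MemLp (fun ω => X ω i j) 2 P)
    (hG : ∀ i j, MemLp (fun ω => G ω i j) 2 P)
    (γ : ℝ) (hγ : 0 < γ) (hγ1 : γ ≤ 1)
    (b : Fin N → ℝ) :
    ∃ Δt₀ > (0 : ℝ), ∀ Δt : ℝ, 0 ≤ Δt → Δt ≤ Δt₀ →
      0 ≤ b ⬝ᵥ (Matrix.of fun i j =>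
            ∫ ω, ((X ω)ᵀ * (X ω - (γ * Δt) • G ω)) i j ∂P).mulVec b :=
  quadratic_form_nonneg_for_small_timestep_general P X G hX hG γ b
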